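/- arXiv:1711.03570 — 7 statements merged into one kernel-verified Lean document; each statement's English description precedes it below -/
import Mathlib

section
/- Let s₁, …, sₙ ∈ [0,1] be item sizes with each sᵢ > 0, let δ = min{|Σ_{i∈X} sᵢ − Σ_{i∈Y} sᵢ| : X, Y ⊆ {1,…,n}, Σ_{i∈X} sᵢ ≠ Σ_{i∈Y} sᵢ} (assumed positive, i.e., the minimum is over a nonempty set), and let ρ > 1 satisfy ρ^δ > 2. If α, β are sums of sizes over two disjoint subsets of items and i is an item not in either subset with β + sᵢ > α, then ρ^(β+sᵢ) > ρ^α + ρ^β. -/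
open Real Finset

/-- Let `s₁,…,sₙ ∈ (0,1]` be item sizes, let `δ` be the minimum of
`|∑_{i∈X} sᵢ - ∑_{i∈Y} sᵢ|` over pairs of subsets with distinct sums
(assumed attained, i.e. `IsLeast`, and positive), and let `ρ > 1` satisfy
`ρ^δ > 2`.  If `α`, `β` are the sums of sizes over two disjoint subsets `A`, `B`
and `i ∉ A ∪ B` with `β + sᵢ > α`, then `ρ^(β+sᵢ) > ρ^α + ρ^β`. -/
theorem rpow_potential_increase_subset_sums
    (n : ℕ) (s : Fin n → ℝ) (hs : ∀ i, 0 < s i ∧ s i ≤ 1)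
    (δ : ℝ)
    (hδ : IsLeast {d : ℝ | ∃ X Y : Finset (Fin n),
        (∑ i ∈ X, s i) ≠ (∑ i ∈ Y, s i) ∧ d = |(∑ i ∈ X, s i) - (∑ i ∈ Y, s i)|} δ)
    (hδpos : 0 < δ)
    (ρ : ℝ) (hρ : 1 < ρ) (hρδ : ρ ^ δ > 2)
    (A B : Finset (Fin n)) (hAB : Disjoint A B)
    (i : Fin n) (hiA : i ∉ A) (hiB : i ∉ B)
    (h : (∑ j ∈ B, s j) + s i > ∑ j ∈ A, s j) :
    ρ ^ ((∑ j ∈ B, s j) + s i) > ρ ^ (∑ j ∈ A, s j) + ρ ^ (∑ j ∈ B, s j) := by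
  have hρ0 : (0:ℝ) < ρ := lt_trans one_pos hρ
  set α := ∑ j ∈ A, s j with hα
  set β := ∑ j ∈ B, s j with hβ
  have hsi : 0 < s i := (hs i).1
  have hsum : ∑ j ∈ insert i B, s j = s i + β := Finset.sum_insert hiB
  have h1 : δ ≤ β + s i - α := by
    have hne : ∑ j ∈ insert i B, s j ≠ α := by rw [hsum]; intro hc; linarith
    have := hδ.2 ⟨insert i B, A, hne, rfl⟩
    rw [hsum, abs_of_pos (by linarith : (0:ℝ) < s i + β - α)] at this
    linarith
  have h2 : δ ≤ s i := by
    have hne : ∑ j ∈ insert i B, s j ≠ β := by rw [hsum]; intro hc; linarith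
    have := hδ.2 ⟨insert i B, B, hne, rfl⟩
    rw [hsum, show s i + β - β = s i by ring, abs_of_pos hsi] at this
    exact this
  have e1 : ρ ^ (α + δ) ≤ ρ ^ (β + s i) :=
    (Real.rpow_le_rpow_left_iff hρ).2 (by linarith)
  have e2 : ρ ^ (β + δ) ≤ ρ ^ (β + s i) :=
    (Real.rpow_le_rpow_left_iff hρ).2 (by linarith)
  rw [Real.rpow_add hρ0] at e1 e2
  nlinarith [Real.rpow_pos_of_pos hρ0 α, Real.rpow_pos_of_pos hρ0 β]
end

section
/- A finite multiset of colored items can be arranged in a linear sequence (packed into a single bin) such that no two adjacent items have the same color if and only if the maximum multiplicity of any color is at most ⌈N/2⌉, where N is the total number of items. -/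
/-!
Two adjacent positions never share a color, so a color occupies at most every other
position: at most `⌈N/2⌉` of them. Conversely, build the sequence greedily from a prescribed
first color `y`, keeping the invariant that of the `N` items still to be placed, `y` makes up
at most `⌈N/2⌉` and every other color at most `⌊N/2⌋`. After placing `y`, a most frequent
color different from `y` satisfies the same invariant for the remaining items.
-/

namespace List

variable {C : Type*} [DecidableEq C]

theorem count_le_length_add_one_div_two_of_isChain_ne (c : C) :
    ∀ {l : List C}, l.IsChain (· ≠ ·) → l.count c ≤ (l.length + 1) / 2
  | [], _ => by simp
  | [a], _ => by simpa using count_le_length (a := c) (l := [a])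
  | a :: b :: t, hl => by
    have hab : a ≠ b := (isChain_cons_cons.1 hl).1
    have ih := count_le_length_add_one_div_two_of_isChain_ne c hl.tail.tail
    simp only [count_cons, length_cons, beq_iff_eq]
    split_ifs <;> simp_all <;> omega

end List

namespace Multiset

variable {C : Type*} [DecidableEq C]

theorem count_add_count_le_card (s : Multiset C) {a b : C} (hab : a ≠ b) :
    s.count a + s.count b ≤ card s := by
  induction s using Multiset.induction with
  | empty => simp
  | cons x t ih =>
    rw [count_cons, count_cons, card_cons]
    by_cases hax : a = x <;> by_cases hbx : b = x <;> simp_all <;> omega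

theorem two_mul_count_le_card_of_count_le {s : Multiset C} {a b : C} (hab : a ≠ b)
    (h : s.count a ≤ s.count b) : 2 * s.count a ≤ card s := by
  have := s.count_add_count_le_card hab
  omega

theorem exists_max_count (s : Multiset C) {p : C → Prop} (h : ∃ x ∈ s, p x) :
    ∃ x ∈ s, p x ∧ ∀ c, p c → s.count c ≤ s.count x := by
  classical
  obtain ⟨x, hx, hmax⟩ := (s.toFinset.filter p).exists_max_image s.count <| by
    obtain ⟨x, hxs, hpx⟩ := h
    exact ⟨x, by simpa using ⟨hxs, hpx⟩⟩
  simp only [Finset.mem_filter, mem_toFinset] at hx hmax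
  refine ⟨x, hx.1, hx.2, fun c hc => ?_⟩
  by_cases hcs : c ∈ s
  · exact hmax c ⟨hcs, hc⟩
  · simp [count_eq_zero_of_notMem hcs]

theorem exists_isChain_ne_cons (s : Multiset C) (y : C) (hy : y ∈ s)
    (hcount_y : 2 * s.count y ≤ card s + 1) (hcount : ∀ c ≠ y, 2 * s.count c ≤ card s) :
    ∃ l : List C, ((y :: l : List C) : Multiset C) = s ∧ (y :: l).IsChain (· ≠ ·) := by
  set t := s.erase y
  have hcard : card t + 1 = card s := card_erase_add_one hy
  have ht_y : t.count y + 1 = s.count y := by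
    rw [count_erase_self]; have := count_pos.2 hy; omega
  have ht_ne : ∀ c ≠ y, t.count c = s.count c := fun c hc => count_erase_of_ne hc s
  have hs : (y ::ₘ t) = s := cons_erase hy
  rcases eq_or_ne t 0 with ht0 | ht0
  · exact ⟨[], by simpa [ht0] using hs, .singleton y⟩
  -- `y` fills at most half of `t`, so `t` has another color
  have hz : ∃ z ∈ t, z ≠ y := by
    by_contra! hall
    have : t.count y = card t := count_eq_card.2 fun z hz => (hall z hz).symm
    have := card_pos.2 ht0
    omega
  obtain ⟨z, hz, hzy, hzmax⟩ := t.exists_max_count hz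
  have hcount_z : 2 * t.count z ≤ card t + 1 := by rw [ht_ne z hzy]; have := hcount z hzy; omega
  have hcount_t : ∀ c ≠ z, 2 * t.count c ≤ card t := by
    intro c hcz
    rcases eq_or_ne c y with rfl | hcy
    · omega
    · exact two_mul_count_le_card_of_count_le hcz (hzmax c hcy)
  obtain ⟨l, hl, hchain⟩ := exists_isChain_ne_cons t z hz hcount_z hcount_t
  exact ⟨z :: l, by rw [← hs, ← hl]; rfl, .cons_cons hzy.symm hchain⟩
termination_by card s
decreasing_by exact card_erase_lt_of_mem hy

end Multiset

/-- A finite multiset of colored items can be arranged in a linear sequence with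
no two adjacent items of the same color iff the maximum multiplicity of any
color is at most `⌈N/2⌉` (here `(N+1)/2` in `ℕ`), where `N` is the number of items. -/
theorem multiset_chain_iff_count_le {C : Type*} [DecidableEq C] (items : Multiset C) :
    (∃ l : List C, (l : Multiset C) = items ∧ l.Chain' (· ≠ ·)) ↔
      ∀ c : C, items.count c ≤ (Multiset.card items + 1) / 2 := by
  constructor
  · rintro ⟨l, rfl, hl⟩ c
    simpa using l.count_le_length_add_one_div_two_of_isChain_ne c hl
  · intro h
    rcases eq_or_ne items 0 with rfl | hne
    · exact ⟨[], rfl, .nil⟩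
    obtain ⟨y, hy, -, hmax⟩ := items.exists_max_count (p := fun _ => True)
      (by simpa using Multiset.exists_mem_of_ne_zero hne)
    obtain ⟨l, hl, hchain⟩ := items.exists_isChain_ne_cons y hy (by have := h y; omega)
      fun c hc => Multiset.two_mul_count_le_card_of_count_le hc (hmax c trivial)
    exact ⟨y :: l, hl, hchain⟩
end

section
/- Let σ be any feasible packing of a set of black and white items into bins, with S_b(σ) the set of bins containing exactly one item which is black, S_w(σ) the set of bins containing exactly one item which is white, and M_w(σ) the set of bins containing at least two items whose top (last) item is white. Let σ* be a feasible packing of the same items minimizing the number of nonempty bins, using F(σ*) bins. Then |S_b(σ)| − |S_w(σ)| − |M_w(σ)| ≤ F(σ*). -/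
/-- Number of nonempty bins of a packing. -/
def openCount (σ : List (List Bool)) : ℕ :=
  (σ.filter (fun b => decide (b ≠ []))).length

/-- A packing is feasible if in every bin no two consecutive items share a color
(black = `true`, white = `false`). -/
def FeasiblePacking (σ : List (List Bool)) : Prop :=
  ∀ b ∈ σ, b.Chain' (· ≠ ·)

namespace SBB

/-- Black excess of a bin. -/
def e (l : List Bool) : ℤ := (l.count true : ℤ) - l.count false

lemma e_cons (a : Bool) (t : List Bool) :
    e (a :: t) = (if a then 1 else -1) + e t := by
  cases a <;> simp [e, List.count_cons] <;> ring

lemma e_eq (l : List Bool) (h : l.Chain' (· ≠ ·)) :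
    e l = (match l.head?, l.getLast? with
      | some true, some true => 1
      | some false, some false => -1
      | _, _ => 0) := by
  induction l with
  | nil => simp [e]
  | cons a t ih =>
    cases t with
    | nil => cases a <;> simp [e]
    | cons b t' =>
      have hab : a ≠ b := (List.isChain_cons_cons.mp h).1
      have hc : (b :: t').Chain' (· ≠ ·) := (List.isChain_cons_cons.mp h).2
      have hib := ih hc
      rw [e_cons, hib]
      have hlast : (a :: b :: t').getLast? = (b :: t').getLast? := by
        simp [List.getLast?_cons_cons]
      rw [hlast]
      obtain ⟨c, hcl⟩ : ∃ c, (b :: t').getLast? = some c := by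
        cases hgl : (b :: t').getLast? with
        | none => simp at hgl
        | some c => exact ⟨c, rfl⟩
      rw [hcl]
      cases a <;> cases b <;> cases c <;> simp_all <;> norm_num

lemma e_append (l m : List Bool) : e (l ++ m) = e l + e m := by
  simp [e, List.count_append]; ring

lemma e_flatten (L : List (List Bool)) : e L.flatten = (L.map e).sum := by
  induction L with
  | nil => simp [e]
  | cons a t ih => simp [List.flatten_cons, e_append, ih]

lemma e_ge (l : List Bool) (h : l.Chain' (· ≠ ·)) : -1 ≤ e l := by
  rw [e_eq l h]; split <;> norm_num

lemma e_le_one (l : List Bool) (h : l.Chain' (· ≠ ·)) : e l ≤ 1 := by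
  rw [e_eq l h]; split <;> norm_num

lemma e_nonneg (l : List Bool) (h : l.Chain' (· ≠ ·))
    (hl : l.getLast? ≠ some false) : 0 ≤ e l := by
  rw [e_eq l h]; split <;> simp_all

lemma e_coe (l m : List Bool) (h : (l : Multiset Bool) = (m : Multiset Bool)) :
    e l = e m := by
  have ht : l.count true = m.count true := by
    rw [← Multiset.coe_count, ← Multiset.coe_count, h]
  have hf : l.count false = m.count false := by
    rw [← Multiset.coe_count, ← Multiset.coe_count, h]
  simp [e, ht, hf]

lemma filter_len {α : Type*} (p : α → Bool) (L : List α) :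
    (((L.filter p).length : ℤ)) = (L.map (fun b => if p b then (1:ℤ) else 0)).sum := by
  induction L with
  | nil => simp
  | cons a t ih => by_cases h : p a <;> simp [List.filter_cons, h, ih, add_comm]

lemma sum_map_sub {α : Type*} (f g : α → ℤ) (L : List α) :
    (L.map f).sum - (L.map g).sum = (L.map (fun x => f x - g x)).sum := by
  induction L with
  | nil => simp
  | cons a t ih => simp [← ih]; ring

end SBB

/-- For a feasible packing `σ` of black and white items, with `S_b` the number of
singleton bins holding a black item, `S_w` the number of singleton bins holding a
white item, and `M_w` the number of bins with at least two items whose top (last)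
item is white, and for `σ*` a feasible packing of the same items minimizing the
number of nonempty bins, we have `|S_b| - |S_w| - |M_w| ≤ F(σ*)`. -/
theorem singleton_black_bound (σ σstar : List (List Bool))
    (hσ : FeasiblePacking σ) (hσstar : FeasiblePacking σstar)
    (hsame : (σ.flatten : Multiset Bool) = (σstar.flatten : Multiset Bool))
    (hopt : ∀ τ : List (List Bool), FeasiblePacking τ →
      (τ.flatten : Multiset Bool) = (σ.flatten : Multiset Bool) →
      openCount σstar ≤ openCount τ) :
    ((σ.filter (fun b => b == [true])).length : ℤ)
      - ((σ.filter (fun b => b == [false])).length : ℤ)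
      - ((σ.filter (fun b => decide (2 ≤ b.length) && (b.getLast? == some false))).length : ℤ)
      ≤ (openCount σstar : ℤ) := by
  classical
  set f : List Bool → ℤ := fun b =>
    (if (b == [true]) then (1:ℤ) else 0) - (if (b == [false]) then (1:ℤ) else 0)
      - (if (decide (2 ≤ b.length) && (b.getLast? == some false)) then (1:ℤ) else 0) with hf
  have hLHS :
      ((σ.filter (fun b => b == [true])).length : ℤ)
        - ((σ.filter (fun b => b == [false])).length : ℤ)
        - ((σ.filter (fun b => decide (2 ≤ b.length) && (b.getLast? == some false))).length : ℤ)
        = (σ.map f).sum := by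
    rw [SBB.filter_len, SBB.filter_len, SBB.filter_len, SBB.sum_map_sub, SBB.sum_map_sub]
  rw [hLHS]
  -- pointwise bound on σ
  have h1 : (σ.map f).sum ≤ (σ.map SBB.e).sum := by
    apply List.sum_le_sum
    intro b hb
    have hch := hσ b hb
    by_cases hbt : b = [true]
    · subst hbt; simp [hf, SBB.e]
    · by_cases hbf : b = [false]
      · subst hbf; simp [hf, SBB.e]
      · by_cases hM : (2 ≤ b.length ∧ b.getLast? = some false)
        · have : f b = -1 := by
            simp [hf, hbt, hbf, hM.1, hM.2]
          rw [this]
          exact SBB.e_ge b hch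
        · have hf0 : f b = 0 := by
            simp only [hf]
            rw [if_neg (by simp [hbt]), if_neg (by simp [hbf]), if_neg]
            · ring
            · simp only [Bool.and_eq_true, decide_eq_true_eq, beq_iff_eq]
              intro h; exact hM ⟨h.1, h.2⟩
          rw [hf0]
          apply SBB.e_nonneg b hch
          intro hlast
          rcases Nat.lt_or_ge b.length 2 with hlen | hlen
          · -- length < 2 but getLast? = some false means b = [false]
            interval_cases hL : b.length
            · simp [List.length_eq_zero_iff.mp hL] at hlast
            · obtain ⟨x, hx⟩ := List.length_eq_one_iff.mp hL
              subst hx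
              simp at hlast
              subst hlast
              exact hbf rfl
          · exact hM ⟨hlen, hlast⟩
  -- connect to σstar via multiset equality
  have h2 : (σ.map SBB.e).sum = (σstar.map SBB.e).sum := by
    rw [← SBB.e_flatten, ← SBB.e_flatten]
    exact SBB.e_coe _ _ hsame
  -- pointwise bound on σstar
  have h3 : (σstar.map SBB.e).sum ≤ (openCount σstar : ℤ) := by
    rw [openCount, SBB.filter_len]
    apply List.sum_le_sum
    intro b hb
    by_cases hb0 : b = []
    · subst hb0; simp [SBB.e]
    · rw [if_pos (by simpa using hb0)]
      exact SBB.e_le_one b (hσstar b hb)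
  calc (σ.map f).sum ≤ (σ.map SBB.e).sum := h1
    _ = (σstar.map SBB.e).sum := h2
    _ ≤ (openCount σstar : ℤ) := h3
end

section
/- For every m ≥ 3 and every M > 0, there exists a colorful bin packing game with m colors, under the egalitarian cost function, whose price of stability exceeds M; that is, every Nash equilibrium uses more than M times the optimal number of bins. -/
/-!
For a parameter `t`, take `4t + 4` big items of size `1 / (t + 1)` and one color, and `4t`
zero-size separators, half of them in each of two further colors. An optimal packing uses four
bins, each alternating `t + 1` big items with `t` separators of a single color. In an egalitarian
equilibrium no item can move onto a longest bin, so every separator whose color differs from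
that of the top item lies in it; since adjacent items differ in color and a bin holds at most
`t + 1` big items, a longest bin contains at least `3t - 2` separators. Every other bin holds at
most one big item more than it holds separators, so the `4t + 4` big items need at least `2t + 2`
bins. Taking `t > 2M` gives the theorem.
-/

open Finset

/-- A bin (list of item indices, bottom to top) is feasible: no two adjacent
items share a color and the total size is at most the unit capacity. -/
def BinOK {n : ℕ} {C : Type*} (size : Fin n → ℝ) (color : Fin n → C)
    (b : List (Fin n)) : Prop :=
  (b.map color).Chain' (· ≠ ·) ∧ (b.map size).sum ≤ 1

/-- A strategy profile is a packing if every item occurs in exactly one bin, once. -/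
def IsPacking {n : ℕ} (σ : Fin n → List (Fin n)) : Prop :=
  ∀ i : Fin n, (∑ j : Fin n, ((σ j).count i)) = 1

/-- The number of open (nonempty) bins of a profile. -/
def openBins {n : ℕ} (σ : Fin n → List (Fin n)) : ℕ :=
  (Finset.univ.filter fun j => σ j ≠ []).card

/-- Nash equilibrium under the egalitarian cost function. -/
def EgalNE {n : ℕ} {C : Type*} (size : Fin n → ℝ) (color : Fin n → C)
    (σ : Fin n → List (Fin n)) : Prop :=
  IsPacking σ ∧ (∀ j, BinOK size color (σ j)) ∧
    ∀ (i : Fin n) (j j' : Fin n), j ≠ j' → i ∈ σ j →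
      BinOK size color (σ j' ++ [i]) → (σ j').length < (σ j).length

theorem List.IsChain.two_mul_countP_le {α β : Type*} {f : α → β} {p : α → Bool}
    (hp : ∀ a b, p a → p b → f a = f b) {l : List α} (hl : l.IsChain fun a b => f a ≠ f b) :
    2 * l.countP p ≤ l.length + 1 := by
  -- the extra `1` is needed only when the head of the list satisfies `p`
  suffices 2 * l.countP p ≤ l.length + (l.take 1).countP p from
    this.trans (Nat.add_le_add_left (List.countP_le_length.trans (by simp)) _)
  induction hl with
  | nil => simp
  | singleton a => cases h : p a <;> simp [h]
  | @cons_cons a b l hab _ ih =>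
    have hb : p a → p b = false := fun ha => by
      cases hb : p b
      · rfl
      · exact absurd (hp a b ha hb) hab
    simp only [List.take_succ_cons, List.take_zero, List.countP_cons, List.countP_nil,
      List.length_cons] at ih ⊢
    cases ha : p a
    · simp only [ite_false, Bool.false_eq_true] at ih ⊢; split_ifs at ih ⊢ <;> omega
    · simp only [hb ha, ite_true, Bool.false_eq_true, ite_false] at ih ⊢; omega

theorem List.countP_eq_sum_count {α : Type*} [Fintype α] [DecidableEq α] (p : α → Bool)
    (l : List α) : l.countP p = ∑ a, if p a then l.count a else 0 := by
  rw [List.countP_eq_length_filter, ← Multiset.coe_card,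
    ← Multiset.sum_count_eq_card (s := univ) (fun a _ => mem_univ a)]
  refine sum_congr rfl fun a _ => ?_
  rw [Multiset.coe_count]
  split_ifs with ha
  · exact List.count_filter ha
  · exact List.count_eq_zero_of_not_mem fun h => ha (List.mem_filter.1 h).2

theorem card_filter_le_countP {α : Type*} [Fintype α] [DecidableEq α] (p : α → Bool)
    (l : List α) (hl : ∀ a, p a → a ∈ l) : #{a | p a} ≤ l.countP p := by
  rw [List.countP_eq_length_filter]
  refine (card_le_card fun a ha => ?_).trans (List.toFinset_card_le _)
  simp_all

section Packing

variable {n : ℕ} {σ : Fin n → List (Fin n)}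

theorem IsPacking.exists_mem (hσ : IsPacking σ) (i : Fin n) : ∃ j, i ∈ σ j := by
  by_contra! h
  simpa [List.count_eq_zero_of_not_mem (h _)] using hσ i

theorem IsPacking.sum_countP (hσ : IsPacking σ) (p : Fin n → Bool) :
    ∑ j, (σ j).countP p = #{i | p i} := by
  simp_rw [List.countP_eq_sum_count p, card_filter]
  rw [sum_comm]
  refine sum_congr rfl fun i _ => ?_
  split_ifs <;> simp [hσ i]

theorem IsPacking.sum_length (hσ : IsPacking σ) : ∑ j, (σ j).length = n := by
  simpa using hσ.sum_countP fun _ => true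

theorem isPacking_of_mem_iff (bin : Fin n → Fin n) (hnd : ∀ j, (σ j).Nodup)
    (hmem : ∀ i j, i ∈ σ j ↔ bin i = j) : IsPacking σ := by
  intro i
  rw [sum_eq_single (bin i)]
  · exact List.count_eq_one_of_mem (hnd _) ((hmem _ _).2 rfl)
  · exact fun j _ hj => List.count_eq_zero_of_not_mem fun h => hj ((hmem _ _).1 h).symm
  · simp

theorem openBins_eq_sum (σ : Fin n → List (Fin n)) :
    openBins σ = ∑ j, if σ j ≠ [] then 1 else 0 :=
  card_filter _ _

end Packing

section Bins

variable {n : ℕ} {C : Type*} {size : Fin n → ℝ} {color : Fin n → C} {l : List (Fin n)} {i : Fin n}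

theorem BinOK.append_singleton (hl : BinOK size color l)
    (hc : ∀ a ∈ l.getLast?, color a ≠ color i) (hs : (l.map size).sum + size i ≤ 1) :
    BinOK size color (l ++ [i]) := by
  refine ⟨?_, by simpa using hs⟩
  rw [List.map_append, List.Chain', List.isChain_append]
  refine ⟨hl.1, List.isChain_singleton _, ?_⟩
  simp only [List.getLast?_map, Option.mem_map, List.map_cons, List.map_nil, List.head?_cons,
    Option.mem_some_iff]
  rintro _ ⟨a, ha, rfl⟩ _ rfl
  exact hc a ha

theorem BinOK.color_getLast_ne (h : BinOK size color (l ++ [i])) :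
    ∀ a ∈ l.getLast?, color a ≠ color i := by
  have := h.1
  rw [List.map_append, List.Chain', List.isChain_append] at this
  intro a ha
  exact this.2.2 _ (by rw [List.getLast?_map]; exact Option.mem_map_of_mem _ ha) _ (by simp)

theorem EgalNE.not_binOK_append_of_longest {σ : Fin n → List (Fin n)} {j : Fin n}
    (hσ : EgalNE size color σ) (hj : ∀ j', (σ j').length ≤ (σ j).length) (hi : i ∉ σ j) :
    ¬BinOK size color (σ j ++ [i]) := fun hok => by
  obtain ⟨j', hij'⟩ := hσ.1.exists_mem i
  have hne : j' ≠ j := by rintro rfl; exact hi hij'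
  exact (hσ.2.2 i j' j hne hij' hok).not_ge (hj j')

end Bins

namespace SeparatorGame

-- Clamped so as to be total; only arguments `k < 8 * t + 4` are used.
def item (t k : ℕ) : Fin (8 * t + 4) := ⟨min k (8 * t + 3), by omega⟩

@[simp] theorem val_item (t k : ℕ) : (item t k : ℕ) = min k (8 * t + 3) := rfl

def isBig (t : ℕ) (i : Fin (8 * t + 4)) : Bool := (i : ℕ) < 4 * t + 4

def isSepOfColor (t c : ℕ) (i : Fin (8 * t + 4)) : Bool := 4 * t + 4 ≤ (i : ℕ) ∧ (i : ℕ) % 2 = c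

noncomputable def size (t : ℕ) (i : Fin (8 * t + 4)) : ℝ :=
  if isBig t i then ((t : ℝ) + 1)⁻¹ else 0

def color {m : ℕ} (hm : 3 ≤ m) (t : ℕ) (i : Fin (8 * t + 4)) : Fin m :=
  ⟨if (i : ℕ) < 4 * t + 4 then 2 else (i : ℕ) % 2, by split_ifs <;> omega⟩

variable {t m : ℕ} {hm : 3 ≤ m} {i : Fin (8 * t + 4)}
  {σ : Fin (8 * t + 4) → List (Fin (8 * t + 4))}

theorem val_color (i : Fin (8 * t + 4)) :
    (color hm t i : ℕ) = if (i : ℕ) < 4 * t + 4 then 2 else (i : ℕ) % 2 := rfl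

theorem val_color_item {k : ℕ} (hk : k < 8 * t + 4) :
    (color hm t (item t k) : ℕ) = if k < 4 * t + 4 then 2 else k % 2 := by
  simp only [val_color, val_item, min_eq_left (Nat.le_of_lt_succ hk)]

theorem color_eq_of_isBig {a b : Fin (8 * t + 4)} (ha : isBig t a) (hb : isBig t b) :
    color hm t a = color hm t b := by
  simp only [isBig, decide_eq_true_eq] at ha hb
  simp [Fin.ext_iff, val_color, ha, hb]

theorem color_eq_of_isSepOfColor {c : ℕ} {a b : Fin (8 * t + 4)} (ha : isSepOfColor t c a)
    (hb : isSepOfColor t c b) : color hm t a = color hm t b := by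
  simp only [isSepOfColor, decide_eq_true_eq] at ha hb
  simp only [Fin.ext_iff, val_color]
  split_ifs <;> omega

theorem size_nonneg (i : Fin (8 * t + 4)) : 0 ≤ size t i := by
  unfold size; split_ifs <;> positivity

theorem size_le_one (i : Fin (8 * t + 4)) : size t i ≤ 1 := by
  unfold size; split_ifs
  · exact inv_le_one_of_one_le₀ (by simp)
  · exact zero_le_one

theorem sum_map_size (l : List (Fin (8 * t + 4))) :
    (l.map (size t)).sum = l.countP (isBig t) * ((t : ℝ) + 1)⁻¹ := by
  induction l with
  | nil => simp
  | cons a l ih =>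
    rw [List.map_cons, List.sum_cons, ih, List.countP_cons, size]
    split_ifs <;> push_cast <;> ring

theorem binOK_iff {l : List (Fin (8 * t + 4))} :
    BinOK (size t) (color hm t) l ↔
      (l.map (color hm t)).IsChain (· ≠ ·) ∧ l.countP (isBig t) ≤ t + 1 := by
  rw [BinOK, sum_map_size, ← div_eq_mul_inv, div_le_one (by positivity)]
  exact and_congr_right fun _ => by exact_mod_cast Iff.rfl

theorem two_mul_countP_isBig_le {l : List (Fin (8 * t + 4))}
    (hl : (l.map (color hm t)).IsChain (· ≠ ·)) : 2 * l.countP (isBig t) ≤ l.length + 1 :=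
  (List.isChain_map _).1 hl |>.two_mul_countP_le fun _ _ => color_eq_of_isBig

theorem card_isBig : 4 * t + 4 ≤ #{i | isBig t i} := by
  simpa using card_le_card_of_injOn (s := range (4 * t + 4)) (item t)
    (fun k hk => by simp_all [isBig]) (fun k hk k' hk' h => by
      simp only [coe_range, Set.mem_Iio, Fin.ext_iff, val_item] at hk hk' h; omega)

theorem card_isSepOfColor {c : ℕ} (hc : c < 2) : 2 * t ≤ #{i | isSepOfColor t c i} := by
  simpa using card_le_card_of_injOn (s := range (2 * t)) (fun k => item t (4 * t + 4 + 2 * k + c))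
    (fun k hk => by simp only [coe_range, Set.mem_Iio] at hk; simp [isSepOfColor]; omega)
    (fun k hk k' hk' h => by
      simp only [coe_range, Set.mem_Iio, Fin.ext_iff, val_item] at hk hk' h; omega)

theorem four_mul_le_length_add_one_of_longest (hσ : EgalNE (size t) (color hm t) σ)
    {j : Fin (8 * t + 4)} (hj : ∀ j', (σ j').length ≤ (σ j).length) :
    4 * t ≤ (σ j).length + 1 := by
  obtain ⟨c, hc2, hc⟩ : ∃ c < 2, ∀ a ∈ (σ j).getLast?, (color hm t a : ℕ) ≠ c := by
    cases (σ j).getLast? with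
    | none => exact ⟨0, by simp⟩
    | some a => exact ⟨if (color hm t a : ℕ) = 0 then 1 else 0, by split_ifs <;> simp_all⟩
  -- a zero-size separator of a color other than the top item's could improve by moving onto `σ j`
  have hsep : ∀ i, isSepOfColor t c i → i ∈ σ j := fun i hi => by
    by_contra hnot
    refine hσ.not_binOK_append_of_longest hj hnot ((hσ.2.1 j).append_singleton ?_ ?_)
    · intro a ha
      simp only [isSepOfColor, decide_eq_true_eq] at hi
      simp only [ne_eq, Fin.ext_iff, val_color, if_neg (not_lt.2 hi.1), hi.2]
      exact hc a ha
    · simp only [isSepOfColor, decide_eq_true_eq] at hi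
      simpa [size, isBig, not_lt.2 hi.1] using (hσ.2.1 j).2
  have hcount := (card_isSepOfColor (t := t) hc2).trans (card_filter_le_countP _ _ hsep)
  have hchain := ((List.isChain_map _).1 (hσ.2.1 j).1).two_mul_countP_le
    (p := isSepOfColor t c) fun _ _ => color_eq_of_isSepOfColor
  omega

theorem two_mul_add_two_le_openBins (hσ : EgalNE (size t) (color hm t) σ) :
    2 * t + 2 ≤ openBins σ := by
  obtain ⟨j, -, hj⟩ := exists_max_image univ (fun j => (σ j).length) ⟨item t 0, mem_univ _⟩
  have hlong := four_mul_le_length_add_one_of_longest hσ fun j' => hj j' (mem_univ _)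
  have hbig := (binOK_iff.1 (hσ.2.1 j)).2
  have hbin : ∀ j', 2 * (σ j').countP (isBig t) ≤ (σ j').length + if σ j' ≠ [] then 1 else 0 := by
    intro j'
    split_ifs with h
    · exact two_mul_countP_isBig_le (binOK_iff.1 (hσ.2.1 j')).1
    · simp_all
  obtain ⟨j₀, h₀⟩ := hσ.1.exists_mem (item t 0)
  have hne : σ j ≠ [] :=
    List.ne_nil_of_length_pos ((List.length_pos_of_mem h₀).trans_le (hj j₀ (mem_univ _)))
  -- Summed over all bins, `length + [nonempty] - 2 * #big` is `openBins σ - 4`, and every term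
  -- is nonnegative, while the term of the longest bin is at least `2t - 2`.
  have hsum := single_le_sum (f := fun j' : Fin (8 * t + 4) =>
      ((σ j').length : ℤ) + (if σ j' ≠ [] then 1 else 0) - 2 * ((σ j').countP (isBig t) : ℤ))
    (fun j' _ => by have := hbin j'; split_ifs at this ⊢ <;> omega) (mem_univ j)
  have hopen : (openBins σ : ℤ) = ∑ j', if σ j' ≠ [] then 1 else 0 := by
    push_cast [openBins_eq_sum]; rfl
  simp only [sum_sub_distrib, sum_add_distrib, ← mul_sum, ← hopen, if_pos hne] at hsum
  push_cast [← Nat.cast_sum, hσ.1.sum_countP, hσ.1.sum_length] at hsum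
  have := card_isBig (t := t)
  omega

def neBin (t : ℕ) : List (Fin (8 * t + 4)) :=
  (List.range (4 * t)).map (fun p => item t (4 * t + 4 + p)) ++ [item t 0]

def neProfile (t : ℕ) (j : Fin (8 * t + 4)) : List (Fin (8 * t + 4)) :=
  if (j : ℕ) = 0 then neBin t else if isBig t j then [j] else []

theorem mem_neBin : i ∈ neBin t ↔ (i : ℕ) = 0 ∨ 4 * t + 4 ≤ (i : ℕ) := by
  simp only [neBin, List.mem_append, List.mem_map, List.mem_range, List.mem_singleton,
    Fin.ext_iff, val_item]
  constructor
  · rintro (⟨p, hp, hi⟩ | h) <;> omega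
  · rintro (h | h)
    · exact Or.inr (by omega)
    · exact Or.inl ⟨i - (4 * t + 4), by omega, by omega⟩

theorem neBin_nodup : (neBin t).Nodup := by
  refine List.nodup_append.2 ⟨?_, List.nodup_singleton _, ?_⟩
  · exact List.nodup_range.map_on fun p hp q hq h => by
      simp only [List.mem_range, Fin.ext_iff, val_item] at hp hq h; omega
  · simp only [List.mem_map, List.mem_range, List.mem_singleton]
    rintro _ ⟨p, hp, rfl⟩ _ rfl h
    simp only [Fin.ext_iff, val_item] at h; omega

theorem length_neBin : (neBin t).length = 4 * t + 1 := by simp [neBin]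

theorem binOK_neBin : BinOK (size t) (color hm t) (neBin t) := by
  refine binOK_iff.2 ⟨?_, ?_⟩
  · rw [neBin, List.map_append, List.isChain_append, List.map_map, List.isChain_map]
    refine ⟨(List.isChain_range _ _).2 fun p hp => ?_, List.isChain_singleton _, ?_⟩
    · rw [Function.comp_apply, Function.comp_apply, ne_eq, Fin.ext_iff,
        val_color_item (by omega), val_color_item (by omega)]
      split_ifs <;> omega
    · simp only [List.getLast?_map, Option.mem_map, List.map_cons, List.map_nil, List.head?_cons,
        Option.mem_some_iff]
      rintro _ ⟨p, hp, rfl⟩ _ rfl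
      have := List.mem_range.1 (List.mem_of_mem_getLast? hp)
      rw [Function.comp_apply, ne_eq, Fin.ext_iff, val_color_item (by omega),
        val_color_item (by omega)]
      split_ifs <;> omega
  · rw [neBin, List.countP_append, List.countP_map, List.countP_eq_zero.2 fun p hp => ?_]
    · simp [isBig]
    · simp only [List.mem_range] at hp
      rw [Function.comp_apply, isBig, val_item, decide_eq_true_iff]
      omega

theorem mem_neProfile_of_ne_zero {j : Fin (8 * t + 4)} (hj : (j : ℕ) ≠ 0) :
    i ∈ neProfile t j ↔ i = j ∧ isBig t j := by
  unfold neProfile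
  split_ifs with h <;> simp_all

theorem isPacking_neProfile : IsPacking (neProfile t) := by
  refine isPacking_of_mem_iff (fun i => if (i : ℕ) = 0 ∨ 4 * t + 4 ≤ (i : ℕ) then item t 0 else i)
    (fun j => ?_) (fun i j => ?_)
  · unfold neProfile
    split_ifs
    exacts [neBin_nodup, List.nodup_singleton _, List.nodup_nil]
  · by_cases hj : (j : ℕ) = 0
    · rw [neProfile, if_pos hj, mem_neBin]
      split_ifs <;> simp only [Fin.ext_iff, val_item] <;> omega
    · rw [mem_neProfile_of_ne_zero hj, isBig, decide_eq_true_eq]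
      split_ifs <;> simp only [Fin.ext_iff, val_item] <;> omega

theorem binOK_neProfile (j : Fin (8 * t + 4)) : BinOK (size t) (color hm t) (neProfile t j) := by
  unfold neProfile
  split_ifs with h0 hbig
  · exact binOK_neBin
  · exact binOK_iff.2 ⟨List.isChain_singleton _, by simp [hbig]⟩
  · exact binOK_iff.2 ⟨List.isChain_nil, by simp⟩

theorem isBig_of_mem_getLast?_neProfile {j a : Fin (8 * t + 4)}
    (ha : a ∈ (neProfile t j).getLast?) : isBig t a := by
  unfold neProfile neBin at ha
  split_ifs at ha with h0 hbig
  · simp only [List.getLast?_concat, Option.mem_some_iff] at ha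
    simp [← ha, isBig]
  · simp_all
  · simp at ha

theorem egalNE_neProfile (ht : 1 ≤ t) : EgalNE (size t) (color hm t) (neProfile t) := by
  refine ⟨isPacking_neProfile, binOK_neProfile, fun i j j' hjj' hi hok => ?_⟩
  by_cases hj : (j : ℕ) = 0
  · have hj' : (j' : ℕ) ≠ 0 := fun h => hjj' (Fin.ext (hj.trans h.symm))
    have h' : (neProfile t j').length ≤ 1 := by
      rw [neProfile, if_neg hj']; split_ifs <;> simp
    have h : (neProfile t j).length = 4 * t + 1 := by rw [neProfile, if_pos hj, length_neBin]
    omega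
  · obtain ⟨rfl, hbig⟩ := (mem_neProfile_of_ne_zero hj).1 hi
    -- every nonempty bin has a big item on top, which blocks the big item `i`
    cases hlast : (neProfile t j').getLast? with
    | none => simp [List.getLast?_eq_none_iff.1 hlast, List.length_pos_of_mem hi]
    | some a =>
      exact absurd (color_eq_of_isBig (isBig_of_mem_getLast?_neProfile hlast) hbig)
        (hok.color_getLast_ne a hlast)

-- Bin `r` alternates the big items `r, r + 4, …, r + 4t` with the separators
-- `4t + 4 + r, 4t + 8 + r, …`, all of color `r % 2`.
def optBin (t r : ℕ) : List (Fin (8 * t + 4)) :=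
  (List.range (2 * t + 1)).map fun x => item t (r + 2 * x + if x % 2 = 0 then 0 else 4 * t + 2)

def optProfile (t : ℕ) (j : Fin (8 * t + 4)) : List (Fin (8 * t + 4)) :=
  if (j : ℕ) < 4 then optBin t j else []

theorem mem_optBin {r : ℕ} (hr : r < 4) : i ∈ optBin t r ↔ (i : ℕ) % 4 = r := by
  simp only [optBin, List.mem_map, List.mem_range, Fin.ext_iff, val_item]
  constructor
  · rintro ⟨x, hx, hi⟩
    split_ifs at hi <;> omega
  · intro h
    refine ⟨if (i : ℕ) < 4 * t + 4 then 2 * (i / 4) else 2 * ((i - (4 * t + 4)) / 4) + 1,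
      by split_ifs <;> omega, ?_⟩
    split_ifs <;> omega

theorem optBin_nodup {r : ℕ} (hr : r < 4) : (optBin t r).Nodup :=
  List.nodup_range.map_on fun x hx y hy h => by
    simp only [List.mem_range, Fin.ext_iff, val_item] at hx hy h
    split_ifs at h <;> omega

theorem binOK_optBin {r : ℕ} (hr : r < 4) : BinOK (size t) (color hm t) (optBin t r) := by
  have hchain : ((optBin t r).map (color hm t)).IsChain (· ≠ ·) := by
    rw [optBin, List.map_map, List.isChain_map, List.isChain_range_succ]
    intro x hx
    rw [Function.comp_apply, Function.comp_apply, ne_eq, Fin.ext_iff,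
      val_color_item (by split_ifs <;> omega), val_color_item (by split_ifs <;> omega)]
    split_ifs <;> omega
  have hlen : (optBin t r).length = 2 * t + 1 := by simp [optBin]
  have := two_mul_countP_isBig_le hchain
  exact binOK_iff.2 ⟨hchain, by omega⟩

theorem isPacking_optProfile : IsPacking (optProfile t) := by
  refine isPacking_of_mem_iff (fun i => item t (i % 4)) (fun j => ?_) (fun i j => ?_)
  · unfold optProfile
    split_ifs with hj
    exacts [optBin_nodup hj, List.nodup_nil]
  · simp only [optProfile, Fin.ext_iff, val_item]
    split_ifs with hj
    · rw [mem_optBin hj]; omega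
    · simp only [List.not_mem_nil, false_iff]; omega

theorem binOK_optProfile (j : Fin (8 * t + 4)) :
    BinOK (size t) (color hm t) (optProfile t j) := by
  unfold optProfile
  split_ifs with hj
  exacts [binOK_optBin hj, binOK_iff.2 ⟨List.isChain_nil, by simp⟩]

theorem openBins_optProfile_le : openBins (optProfile t) ≤ 4 := by
  rw [openBins]
  refine (card_le_card fun j hj => ?_).trans ((card_image_le (s := range 4) (f := item t)).trans
    (card_range 4).le)
  have hj : optProfile t j ≠ [] := (mem_filter.1 hj).2
  unfold optProfile at hj
  split_ifs at hj with h
  · exact mem_image.2 ⟨j, mem_range.2 h, Fin.ext (by simp only [val_item]; omega)⟩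
  · exact absurd rfl hj

end SeparatorGame

theorem PoS_unbounded_egalitarian_general (m : ℕ) (hm : 3 ≤ m) (M : ℝ) :
    ∃ (n : ℕ) (size : Fin n → ℝ) (color : Fin n → Fin m),
      (∀ i, 0 ≤ size i ∧ size i ≤ 1) ∧
      (∃ σ, EgalNE size color σ) ∧
      ∀ σ σstar : Fin n → List (Fin n), EgalNE size color σ →
        (IsPacking σstar ∧ ∀ j, BinOK size color (σstar j)) →
        (∀ τ, IsPacking τ → (∀ j, BinOK size color (τ j)) →
          openBins σstar ≤ openBins τ) →
        (openBins σ : ℝ) > M * (openBins σstar : ℝ) := by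
  set t := ⌈2 * M⌉₊ + 1 with ht
  refine ⟨8 * t + 4, SeparatorGame.size t, SeparatorGame.color hm t,
    fun i => ⟨SeparatorGame.size_nonneg i, SeparatorGame.size_le_one i⟩,
    ⟨_, SeparatorGame.egalNE_neProfile (by omega)⟩, fun σ σstar hσ _ hmin => ?_⟩
  have hne : (2 * t + 2 : ℝ) ≤ openBins σ := by
    exact_mod_cast SeparatorGame.two_mul_add_two_le_openBins hσ
  have hopt : (openBins σstar : ℝ) ≤ 4 := by
    exact_mod_cast (hmin _ SeparatorGame.isPacking_optProfile
      SeparatorGame.binOK_optProfile).trans SeparatorGame.openBins_optProfile_le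
  have hM : 2 * M + 1 ≤ t := by
    rw [ht]; push_cast; linarith [Nat.le_ceil (2 * M)]
  rcases le_or_gt M 0 with hM0 | hM0
  · nlinarith [(openBins σstar).cast_nonneg (α := ℝ)]
  · nlinarith

/-- For every `m ≥ 3` and every `M > 0` there is a colorful bin packing game with
`m` colors whose price of stability under the egalitarian cost function exceeds
`M`: Nash equilibria exist, and every Nash equilibrium uses more than `M` times
the optimal number of bins. -/
theorem PoS_unbounded_egalitarian (m : ℕ) (hm : 3 ≤ m) (M : ℝ) (hM : 0 < M) :
    ∃ (n : ℕ) (size : Fin n → ℝ) (color : Fin n → Fin m),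
      (∀ i, 0 ≤ size i ∧ size i ≤ 1) ∧
      (∃ σ, EgalNE size color σ) ∧
      ∀ σ σstar : Fin n → List (Fin n), EgalNE size color σ →
        (IsPacking σstar ∧ ∀ j, BinOK size color (σstar j)) →
        (∀ τ, IsPacking τ → (∀ j, BinOK size color (τ j)) →
          openBins σstar ≤ openBins τ) →
        (openBins σ : ℝ) > M * (openBins σstar : ℝ) :=
  PoS_unbounded_egalitarian_general m hm M
end

section
/- For the greedy first-fit construction in colorful bin packing: if a packing is produced by repeatedly opening a new bin and filling it with a set of items that maximizes the number of items feasibly packable into one bin (respecting capacity and the no-two-adjacent-same-color constraint) among the remaining items, then the resulting packing is a Nash equilibrium under the egalitarian cost function. -/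
open Finset

/-- Greedy construction for the egalitarian cost function: the bins
`bins 0, bins 1, …` (in order of opening) partition the items, each bin is
feasible, and each bin has maximum cardinality among the feasible bins that can
be formed from the items still remaining when it is opened.  Then the resulting
packing is a Nash equilibrium under the egalitarian cost function: for every
item `i` in a bin `bins l` and every other bin `bins l'` on top of which `i`
could feasibly be moved, `|bins l'| < |bins l|`. -/
theorem greedy_maxcard_is_egalitarian_NE
    (n t m : ℕ) (size : Fin n → ℝ) (color : Fin n → Fin m)
    (hsize : ∀ i, 0 ≤ size i ∧ size i ≤ 1)
    (bins : Fin t → List (Fin n))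
    (hpart : ∀ i : Fin n, (∑ l : Fin t, ((bins l).count i)) = 1)
    (hfeas : ∀ l, BinOK size color (bins l))
    (hmax : ∀ l : Fin t, ∀ S : List (Fin n), S.Nodup →
      (∀ i ∈ S, ∀ l' : Fin t, l' < l → i ∉ bins l') →
      BinOK size color S → S.length ≤ (bins l).length) :
    ∀ (i : Fin n) (l l' : Fin t), l ≠ l' → i ∈ bins l →
      BinOK size color (bins l' ++ [i]) → (bins l').length < (bins l).length := by

  intro i l l' hne hi hBS
  have hcount : ∀ (j : Fin n) (l0 : Fin t), (bins l0).count j ≤ 1 := by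
    intro j l0
    calc (bins l0).count j ≤ ∑ l1 : Fin t, (bins l1).count j :=
          Finset.single_le_sum (f := fun l1 => (bins l1).count j) (fun _ _ => Nat.zero_le _) (Finset.mem_univ l0)
      _ = 1 := hpart j
  have hnodup : ∀ l0, (bins l0).Nodup := fun l0 =>
    List.nodup_iff_count_le_one.mpr (fun j => hcount j l0)
  have hdisj : ∀ (j : Fin n) (l1 l2 : Fin t), l1 ≠ l2 → j ∈ bins l1 → j ∉ bins l2 := by
    intro j l1 l2 h12 h1 h2
    have e := hpart j
    rw [← Finset.sum_erase_add _ _ (Finset.mem_univ l1)] at e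
    have h2' : (bins l2).count j ≤ ∑ l0 ∈ Finset.univ.erase l1, (bins l0).count j :=
      Finset.single_le_sum (f := fun l0 => (bins l0).count j) (fun _ _ => Nat.zero_le _) (Finset.mem_erase.mpr ⟨Ne.symm h12, Finset.mem_univ _⟩)
    have c1 : 1 ≤ (bins l1).count j := List.count_pos_iff.mpr h1
    have c2 : 1 ≤ (bins l2).count j := List.count_pos_iff.mpr h2
    omega
  have hSnodup : (bins l' ++ [i]).Nodup := by
    refine List.Nodup.append (hnodup l') (List.nodup_singleton i) ?_
    intro a ha hb
    rw [List.mem_singleton] at hb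
    subst hb
    exact hdisj a l l' hne hi ha
  rcases lt_or_gt_of_ne hne with hll' | hl'l
  · -- l < l' : apply maximality at l
    have hrem : ∀ j ∈ bins l' ++ [i], ∀ l'' : Fin t, l'' < l → j ∉ bins l'' := by
      intro j hj l'' hlt
      rcases List.mem_append.mp hj with h | h
      · exact hdisj j l' l'' (Ne.symm (ne_of_lt (hlt.trans hll'))) h
      · rw [List.mem_singleton] at h; subst h
        exact hdisj j l l'' (Ne.symm (ne_of_lt hlt)) hi
    have := hmax l _ hSnodup hrem hBS
    simp only [List.length_append, List.length_singleton] at this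
    omega
  · -- l' < l : contradiction with maximality at l'
    have hrem : ∀ j ∈ bins l' ++ [i], ∀ l'' : Fin t, l'' < l' → j ∉ bins l'' := by
      intro j hj l'' hlt
      rcases List.mem_append.mp hj with h | h
      · exact hdisj j l' l'' (Ne.symm (ne_of_lt hlt)) h
      · rw [List.mem_singleton] at h; subst h
        exact hdisj j l l'' (Ne.symm (ne_of_lt (hlt.trans hl'l))) hi
    have := hmax l' _ hSnodup hrem hBS
    simp only [List.length_append, List.length_singleton] at this
    omega
end

section
/- In any Nash equilibrium of a colorful bin packing game with uniform sizes, there is at most one open bin that is neither full (contains κ items) nor a singleton; moreover all singleton bins store items of a single common color, and if a non-full non-singleton bin exists alongside a singleton bin, its top item has that same color. -/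
open Finset

/-- In a uniform-size game, a bin (list of item indices, bottom to top) is
feasible if no two adjacent items share a color and it holds at most `κ` items. -/
def UBinOK {n : ℕ} {C : Type*} (color : Fin n → C) (κ : ℕ) (b : List (Fin n)) : Prop :=
  (b.map color).Chain' (· ≠ ·) ∧ b.length ≤ κ

/-- Nash equilibrium of a uniform-size colorful bin packing game (the
egalitarian and proportional cost functions coincide): the profile is a feasible
packing and no item in a bin with `k` items can move to the top of another bin
feasibly holding it with at least `k` items. -/
def UNE {n : ℕ} {C : Type*} (color : Fin n → C) (κ : ℕ)
    (σ : Fin n → List (Fin n)) : Prop :=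
  IsPacking σ ∧ (∀ j, UBinOK color κ (σ j)) ∧
    ∀ (i : Fin n) (j j' : Fin n), j ≠ j' → i ∈ σ j →
      UBinOK color κ (σ j' ++ [i]) → (σ j').length < (σ j).length

/-!
An item may always move to the top of a non-full bin whose top has another color, and it
gains exactly when that bin is at least as large as its own. A bin with two or more items
always holds an item whose color differs from any given one (its two bottom items differ),
so two non-full non-singleton bins could each send an item to the other, forcing each to be
strictly larger than the other. A singleton item can likewise move onto any non-full
nonempty bin, so the top of every such bin, in particular every other singleton, has its color.
-/

lemma List.exists_mem_ne_of_isChain_ne {α β : Type*} (f : α → β) {L : List α}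
    (h2 : 2 ≤ L.length) (hchain : (L.map f).IsChain (· ≠ ·)) (c : β) :
    ∃ a ∈ L, f a ≠ c := by
  obtain _ | ⟨a, _ | ⟨b, t⟩⟩ := L
  · simp at h2
  · simp at h2
  · have hab : f a ≠ f b := (List.isChain_cons_cons.mp hchain).1
    by_cases ha : f a = c
    · exact ⟨b, by simp, fun hb => hab (ha.trans hb.symm)⟩
    · exact ⟨a, by simp, ha⟩

lemma UBinOK.append_singleton {n : ℕ} {C : Type*} {color : Fin n → C} {κ : ℕ}
    {L : List (Fin n)} {i : Fin n} (hok : UBinOK color κ L) (hlen : L.length < κ)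
    (htop : ∀ x ∈ L.getLast?, color x ≠ color i) :
    UBinOK color κ (L ++ [i]) := by
  refine ⟨?_, by simpa using hlen⟩
  change (List.map color (L ++ [i])).IsChain (· ≠ ·)
  rw [List.map_append, List.isChain_append]
  refine ⟨hok.1, List.isChain_singleton _, ?_⟩
  intro x hx y hy
  simp only [List.getLast?_map, Option.mem_def, Option.map_eq_some_iff, List.map_cons,
    List.map_nil, List.head?_cons, Option.some.injEq] at hx hy
  obtain ⟨a, ha, rfl⟩ := hx
  exact hy ▸ htop a ha

namespace UNE

variable {n κ : ℕ} {C : Type*} {color : Fin n → C} {σ : Fin n → List (Fin n)}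

lemma length_lt_of_mem (hNE : UNE color κ σ) {l l' i : Fin n} (hll : l ≠ l')
    (hi : i ∈ σ l) (hlt : (σ l').length < κ)
    (htop : ∀ x ∈ (σ l').getLast?, color x ≠ color i) :
    (σ l').length < (σ l).length :=
  hNE.2.2 i l l' hll hi ((hNE.2.1 l').append_singleton hlt htop)

lemma length_lt_of_two_le_length (hNE : UNE color κ σ) {l l' : Fin n} (hll : l ≠ l')
    (h2 : 2 ≤ (σ l).length) (hlt : (σ l').length < κ) :
    (σ l').length < (σ l).length := by
  obtain ⟨i, hi, htop⟩ : ∃ i ∈ σ l, ∀ x ∈ (σ l').getLast?, color x ≠ color i := by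
    cases htop : (σ l').getLast? with
    | none => exact ⟨(σ l).head (List.ne_nil_of_length_pos (by omega)), List.head_mem _, by simp⟩
    | some t =>
      obtain ⟨i, hi, hci⟩ := List.exists_mem_ne_of_isChain_ne color h2 (hNE.2.1 l).1 (color t)
      exact ⟨i, hi, by simpa using Ne.symm hci⟩
  exact hNE.length_lt_of_mem hll hi hlt htop

lemma top_color_eq_of_singleton (hNE : UNE color κ σ) {l l' i' : Fin n} (hll : l ≠ l')
    (hne : σ l ≠ []) (hlt : (σ l).length < κ) (hl' : σ l' = [i']) :
    ((σ l).getLast?).map color = some (color i') := by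
  obtain ⟨t, ht⟩ : ∃ t, (σ l).getLast? = some t := ⟨_, List.getLast?_eq_some_getLast hne⟩
  rw [ht, Option.map_some, Option.some.injEq]
  by_contra hc
  have := hNE.length_lt_of_mem hll.symm (i := i') (by simp [hl']) hlt (by simpa [ht] using hc)
  simp [hl', hne] at this

end UNE

/-- Structure of Nash equilibria in uniform-size colorful bin packing games:
there is at most one open bin that is neither full (`κ` items) nor a singleton;
all singleton bins store items of a single common color; and if a non-full
non-singleton bin exists alongside a singleton bin, its top item has that same
color. -/
theorem NE_structure_uniform {n κ : ℕ} {C : Type*} (color : Fin n → C)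
    (hκ : 2 ≤ κ) (σ : Fin n → List (Fin n)) (hNE : UNE color κ σ) :
    (∀ l l' : Fin n,
        (2 ≤ (σ l).length ∧ (σ l).length < κ) →
        (2 ≤ (σ l').length ∧ (σ l').length < κ) → l = l') ∧
    (∀ (l l' : Fin n) (i i' : Fin n), σ l = [i] → σ l' = [i'] →
        color i = color i') ∧
    (∀ (l l' : Fin n) (i' : Fin n),
        (2 ≤ (σ l).length ∧ (σ l).length < κ) → σ l' = [i'] →
        ((σ l).getLast?).map color = some (color i')) := by
  refine ⟨?_, ?_, ?_⟩
  · intro l l' ⟨h2, hlt⟩ ⟨h2', hlt'⟩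
    by_contra hll
    have := hNE.length_lt_of_two_le_length hll h2 hlt'
    have := hNE.length_lt_of_two_le_length (Ne.symm hll) h2' hlt
    omega
  · intro l l' i i' hl hl'
    by_cases hll : l = l'
    · subst hll
      exact congrArg color (List.singleton_inj.mp (hl.symm.trans hl'))
    · simpa [hl] using
        hNE.top_color_eq_of_singleton hll (by simp [hl]) (by rw [hl, List.length_singleton]; omega) hl'
  · intro l l' i' ⟨h2, hlt⟩ hl'
    have hll : l ≠ l' := by rintro rfl; simp [hl'] at h2
    exact hNE.top_color_eq_of_singleton hll (List.ne_nil_of_length_pos (by omega)) hlt hl'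
end

section
/- There exists a black and white bin packing game with uniform sizes admitting an infinite sequence of improving deviations; hence colorful bin packing games do not in general possess the finite improvement path property. -/
open Finset

/-- Item `i` is misplaced in bin `L`: it is adjacent (in the bin's order) to an
item of the same color. -/
def Misplaced {n : ℕ} {C : Type*} (color : Fin n → C) (L : List (Fin n))
    (i : Fin n) : Prop :=
  ∃ j : ℕ, j + 1 < L.length ∧ (L[j]? = some i ∨ L[j + 1]? = some i) ∧
    (L[j]?).map color = (L[j + 1]?).map color

/-- One improving deviation: item `i` moves from bin `l` to the top of bin `l'`
(which has room for it, deviations into infeasible bins being allowed), and its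
cost strictly decreases: it is not misplaced afterwards, and beforehand it was
either misplaced (infinite cost) or in a bin not larger than the destination. -/
def ImprovingStep {n : ℕ} {C : Type*} (color : Fin n → C) (κ : ℕ)
    (σ σ' : Fin n → List (Fin n)) : Prop :=
  ∃ (i : Fin n) (l l' : Fin n), l ≠ l' ∧ i ∈ σ l ∧ (σ l').length < κ ∧
    σ' l = (σ l).erase i ∧ σ' l' = σ l' ++ [i] ∧
    (∀ l'', l'' ≠ l → l'' ≠ l' → σ' l'' = σ l'') ∧
    ¬ Misplaced color (σ' l') i ∧
    (Misplaced color (σ l) i ∨ (σ l).length ≤ (σ l').length)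

/-!
Starting from the profile with bins `[w₃, w₁, b₂]` and `[b₃, w₂, b₁]` (bottom to top), five
improving deviations lead to the same profile with its items relabelled by the colour-preserving
rotation `b₁ → b₂ → b₃ → b₁`, `w₁ → w₂ → w₃ → w₁`. Improving deviations commute with
colour-preserving relabellings of the items, so repeating the five deviations on ever further
rotated items never stops, and every deviation keeps the profile a packing.
-/

section Repeat

variable {α : Type*} (g : α → α) (p : ℕ → α) (m : ℕ)

def repeatTwisted (t : ℕ) : α :=
  g^[t / m] (p (t % m))

variable {g p m}

lemma repeatTwisted_succ (hm : 0 < m) (hpm : p m = g (p 0)) (t : ℕ) :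
    repeatTwisted g p m (t + 1) = g^[t / m] (p (t % m + 1)) := by
  have hdiv := Nat.mod_add_div t m
  have hmod := Nat.mod_lt t hm
  unfold repeatTwisted
  rcases Nat.lt_or_ge (t % m + 1) m with hlt | hge
  · obtain ⟨hq, hr⟩ : (t + 1) / m = t / m ∧ (t + 1) % m = t % m + 1 :=
      (Nat.div_mod_unique hm).2 ⟨by omega, hlt⟩
    rw [hq, hr]
  · obtain ⟨hq, hr⟩ : (t + 1) / m = t / m + 1 ∧ (t + 1) % m = 0 :=
      (Nat.div_mod_unique hm).2 ⟨by rw [mul_add]; omega, hm⟩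
    rw [hq, hr, Function.iterate_succ_apply, ← hpm, show t % m + 1 = m by omega]

lemma repeatTwisted_chain {R : α → α → Prop} (hR : ∀ a b, R a b → R (g a) (g b)) (hm : 0 < m)
    (hp : ∀ r < m, R (p r) (p (r + 1))) (hpm : p m = g (p 0)) (t : ℕ) :
    R (repeatTwisted g p m t) (repeatTwisted g p m (t + 1)) := by
  rw [repeatTwisted_succ hm hpm]
  have hiter : ∀ k a b, R a b → R (g^[k] a) (g^[k] b) := by
    intro k
    induction k with
    | zero => exact fun _ _ h => h
    | succ k ih =>
      exact fun a b h => by simpa only [Function.iterate_succ_apply] using ih _ _ (hR a b h)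
  exact hiter _ _ _ (hp _ (Nat.mod_lt t hm))

end Repeat

section Relabel

variable {n : ℕ} {C : Type*} {color : Fin n → C} {π : Equiv.Perm (Fin n)}

def relabelItems (π : Equiv.Perm (Fin n)) (σ : Fin n → List (Fin n)) : Fin n → List (Fin n) :=
  fun l => (σ l).map π

lemma misplaced_map_iff (hπ : ∀ i, color (π i) = color i) (L : List (Fin n)) (i : Fin n) :
    Misplaced color (L.map π) (π i) ↔ Misplaced color L i := by
  have hsome : ∀ x : Option (Fin n), x.map π = some (π i) ↔ x = some i := fun x =>
    (Option.map_injective π.injective).eq_iff' rfl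
  have hcolor : color ∘ π = color := funext hπ
  simp only [Misplaced, List.length_map, List.getElem?_map, hsome, Option.map_map, hcolor]

lemma ImprovingStep.relabel {κ : ℕ} {σ σ' : Fin n → List (Fin n)}
    (hπ : ∀ i, color (π i) = color i) (h : ImprovingStep color κ σ σ') :
    ImprovingStep color κ (relabelItems π σ) (relabelItems π σ') := by
  obtain ⟨i, l, l', hll', hi, hroom, hl, hl', hframe, hfine, hcost⟩ := h
  refine ⟨π i, l, l', hll', List.mem_map_of_mem hi,
    by simpa only [relabelItems, List.length_map] using hroom, ?_, ?_,
    fun l'' h₁ h₂ => congrArg (List.map π) (hframe l'' h₁ h₂), ?_, ?_⟩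
  · simp only [relabelItems, hl, List.map_erase π.injective]
  · simp only [relabelItems, hl', List.map_append, List.map_singleton]
  · simpa only [relabelItems, hl', ← List.map_singleton, ← List.map_append, misplaced_map_iff hπ]
      using hfine
  · simpa only [relabelItems, misplaced_map_iff hπ, List.length_map] using hcost

end Relabel

lemma IsPacking.of_improvingStep {n : ℕ} {C : Type*} {color : Fin n → C} {κ : ℕ}
    {σ σ' : Fin n → List (Fin n)} (hσ : IsPacking σ) (h : ImprovingStep color κ σ σ') :
    IsPacking σ' := by
  obtain ⟨i, l, l', hll', hi, -, hl, hl', hframe, -⟩ := h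
  intro x
  have hsplit : ∀ τ : Fin n → List (Fin n), ∑ j, (τ j).count x =
      (τ l).count x + (τ l').count x + ∑ j ∈ (univ.erase l).erase l', (τ j).count x := by
    intro τ
    rw [← add_sum_erase _ _ (mem_univ l),
      ← add_sum_erase _ _ (mem_erase.2 ⟨hll'.symm, mem_univ l'⟩), add_assoc]
  have hrest : ∑ j ∈ (univ.erase l).erase l', (σ' j).count x =
      ∑ j ∈ (univ.erase l).erase l', (σ j).count x :=
    sum_congr rfl fun j hj => by
      rw [hframe j (ne_of_mem_erase (mem_of_mem_erase hj)) (ne_of_mem_erase hj)]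
  have hpos : 0 < (σ l).count i := List.count_pos_iff.2 hi
  rw [← hσ x, hsplit, hsplit σ, hrest, hl, hl', List.count_erase, List.count_append,
    List.count_singleton]
  by_cases hxi : x = i
  · subst hxi; simp only [beq_self_eq_true, if_true]; omega
  · simp [Ne.symm hxi]

instance {n : ℕ} {C : Type*} [DecidableEq C] (color : Fin n → C) (L : List (Fin n)) (i : Fin n) :
    Decidable (Misplaced color L i) :=
  decidable_of_iff (∃ j < L.length - 1, (L[j]? = some i ∨ L[j + 1]? = some i) ∧
      (L[j]?).map color = (L[j + 1]?).map color) <| by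
    unfold Misplaced
    exact exists_congr fun j => by constructor <;> rintro ⟨h, h'⟩ <;> exact ⟨by omega, h'⟩

instance {n : ℕ} {C : Type*} [DecidableEq C] (color : Fin n → C) (κ : ℕ)
    (σ σ' : Fin n → List (Fin n)) : Decidable (ImprovingStep color κ σ σ') := by
  delta ImprovingStep; infer_instance

-- Items `0, 1, 2` are `b₁, b₂, b₃` and items `3, 4, 5` are `w₁, w₂, w₃`.
def blackWhite : Fin 6 → Bool := ![true, true, true, false, false, false]

def rotateColorClasses : Equiv.Perm (Fin 6) :=
  ⟨![1, 2, 0, 4, 5, 3], ![2, 0, 1, 5, 3, 4], by decide, by decide⟩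

def deviationRound : ℕ → Fin 6 → List (Fin 6)
  | 0 => ![[5, 3, 1], [], [2, 4, 0], [], [], []]
  | 1 => ![[5, 3, 1, 4], [], [2, 0], [], [], []]
  | 2 => ![[3, 1, 4], [5], [2, 0], [], [], []]
  | 3 => ![[3, 1, 4], [], [2, 0, 5], [], [], []]
  | 4 => ![[3, 4], [], [2, 0, 5, 1], [], [], []]
  | _ => ![[3, 4, 2], [], [0, 5, 1], [], [], []]

lemma blackWhite_rotateColorClasses (i : Fin 6) :
    blackWhite (rotateColorClasses i) = blackWhite i := by
  revert i; decide

lemma isPacking_deviationRound_zero : IsPacking (deviationRound 0) := by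
  unfold IsPacking; decide

lemma improvingStep_deviationRound :
    ∀ r < 5, ImprovingStep blackWhite 4 (deviationRound r) (deviationRound (r + 1)) := by
  decide

lemma deviationRound_five :
    deviationRound 5 = relabelItems rotateColorClasses (deviationRound 0) := by
  funext l; revert l; decide

/-- There is a black and white bin packing game with uniform sizes admitting an
infinite sequence of improving deviations; hence colorful bin packing games do
not in general possess the finite improvement path property. -/
theorem no_finite_improvement_path :
    ∃ (n κ : ℕ) (color : Fin n → Bool)
      (f : ℕ → (Fin n → List (Fin n))),
      2 ≤ κ ∧ (∀ t, IsPacking (f t)) ∧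
      ∀ t, ImprovingStep color κ (f t) (f (t + 1)) := by
  have hstep := repeatTwisted_chain
    (fun _ _ => ImprovingStep.relabel blackWhite_rotateColorClasses) (by norm_num)
    improvingStep_deviationRound deviationRound_five
  refine ⟨6, 4, blackWhite, _, by norm_num, fun t => ?_, hstep⟩
  induction t with
  | zero => exact isPacking_deviationRound_zero
  | succ t ih => exact ih.of_improvingStep (hstep t)
end
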